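/- The map Φ̃ is a 2:1 cover ramified exactly over Γ, away from the eight tangent lines: for every (z, w) ∈ ℂ² with z ∉ {0, 1, λ} and w ∉ {0, 1, λ}, the set F(z, w) = { (b₀ : b₁ : b₂) ∈ ℙ²(ℂ) : (b₀t − b₁)(b₁² − b₀b₂) ≠ 0, (b₁t − b₂)/(b₀t − b₁) = z and −b₁(b₀λ − b₁λ − b₁ + b₂)/(b₁² − b₀b₂) = w } has exactly 2 elements if P_Γ(z, w) ≠ 0, and exactly 1 element if P_Γ(z, w) = 0. -/

import Mathlib

open scoped LinearAlgebra.Projectivization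

/-- The bidegree `(2,2)` polynomial `P_Γ(z, w)` defining the curve `Γ ⊂ ℙ¹×ℙ¹`. -/
noncomputable def PGamma (l t z w : ℂ) : ℂ :=
  t ^ 2 * z ^ 2 - 2 * t * z ^ 2 * w + t ^ 2 * w ^ 2 - 2 * t * z * w ^ 2 + z ^ 2 * w ^ 2
    - 2 * l * t * z - 2 * l * t * w + 2 * (2 * (l + 1) * t - t ^ 2 - l) * z * w + l ^ 2

/-- The fiber `F(z, w)` of `Φ̃` over an affine point `(z, w)`, consisting of the points
`(b₀ : b₁ : b₂) ∈ ℙ²(ℂ)` where both affine coordinates of `Φ̃` are defined and equal to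
`z` and `w` respectively. (Both defining conditions are invariant under rescaling the
representative, so this set of projective points is well defined.) -/
noncomputable def PhiFiber (l t z w : ℂ) : Set (ℙ ℂ (Fin 3 → ℂ)) :=
  {p | (p.rep 0 * t - p.rep 1 ≠ 0 ∧ p.rep 1 ^ 2 - p.rep 0 * p.rep 2 ≠ 0) ∧
    (p.rep 1 * t - p.rep 2) / (p.rep 0 * t - p.rep 1) = z ∧
    -(p.rep 1) * (p.rep 0 * l - p.rep 1 * l - p.rep 1 + p.rep 2) /
        (p.rep 1 ^ 2 - p.rep 0 * p.rep 2) = w}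

/-!
Since `w ≠ 0` forces `b₁ ≠ 0`, every point of the fiber can be normalised to `b₁ = 1`. The first
equation then gives `b₂ = t + z - z t b₀`, and the second becomes a quadratic in `b₀` whose
discriminant is `P_Γ(z, w)`. For `t ∉ {0, 1, λ}` and `z ∉ {1, λ}` no root of that quadratic lies
on the indeterminacy locus of `Φ̃`, so the fiber is in bijection with the root set.
-/

theorem ncard_setOf_quadratic_eq_zero_of_discrim_eq_zero {K : Type*} [Field K] [NeZero (2 : K)]
    {a b c : K} (ha : a ≠ 0) (hd : discrim a b c = 0) :
    {x | a * (x * x) + b * x + c = 0}.ncard = 1 := by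
  simp only [quadratic_eq_zero_iff_of_discrim_eq_zero ha hd, Set.ofPred_eq_eq_singleton,
    Set.ncard_singleton]

theorem ncard_setOf_quadratic_eq_zero_of_discrim_ne_zero {K : Type*} [Field K] [IsAlgClosed K]
    [NeZero (2 : K)] {a b c : K} (ha : a ≠ 0) (hd : discrim a b c ≠ 0) :
    {x | a * (x * x) + b * x + c = 0}.ncard = 2 := by
  obtain ⟨s, hs⟩ := IsAlgClosed.exists_eq_mul_self (discrim a b c)
  have roots : {x | a * (x * x) + b * x + c = 0} = {(-b + s) / (2 * a), (-b - s) / (2 * a)} := by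
    ext x
    exact quadratic_eq_zero_iff ha hs x
  rw [roots]
  refine Set.ncard_pair fun h => hd ?_
  rw [div_left_inj' (mul_ne_zero (NeZero.ne 2) ha)] at h
  have hs0 : 2 * s = 0 := by linear_combination h
  rw [hs, (mul_eq_zero.1 hs0).resolve_left (NeZero.ne 2), mul_zero]

def FiberEquations (l t z w : ℂ) (v : Fin 3 → ℂ) : Prop :=
  v 0 * t - v 1 ≠ 0 ∧ v 1 ^ 2 - v 0 * v 2 ≠ 0 ∧
    v 1 * t - v 2 = z * (v 0 * t - v 1) ∧
    -v 1 * (v 0 * l - v 1 * l - v 1 + v 2) = w * (v 1 ^ 2 - v 0 * v 2)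

theorem mem_phiFiber_iff {l t z w : ℂ} {p : ℙ ℂ (Fin 3 → ℂ)} :
    p ∈ PhiFiber l t z w ↔ FiberEquations l t z w p.rep := by
  unfold PhiFiber FiberEquations
  constructor
  · rintro ⟨⟨h1, h2⟩, e1, e2⟩
    exact ⟨h1, h2, (div_eq_iff h1).1 e1, (div_eq_iff h2).1 e2⟩
  · rintro ⟨h1, h2, e1, e2⟩
    exact ⟨⟨h1, h2⟩, (div_eq_iff h1).2 e1, (div_eq_iff h2).2 e2⟩

theorem fiberEquations_smul_iff {l t z w c : ℂ} (hc : c ≠ 0) (v : Fin 3 → ℂ) :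
    FiberEquations l t z w (c • v) ↔ FiberEquations l t z w v := by
  unfold FiberEquations
  simp only [Pi.smul_apply, smul_eq_mul]
  have d1 : c * v 0 * t - c * v 1 = c * (v 0 * t - v 1) := by ring
  have d2 : (c * v 1) ^ 2 - c * v 0 * (c * v 2) = c ^ 2 * (v 1 ^ 2 - v 0 * v 2) := by ring
  have n1 : c * v 1 * t - c * v 2 = c * (v 1 * t - v 2) := by ring
  have n2 : -(c * v 1) * (c * v 0 * l - c * v 1 * l - c * v 1 + c * v 2) =
      c ^ 2 * (-v 1 * (v 0 * l - v 1 * l - v 1 + v 2)) := by ring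
  rw [d1, d2, n1, n2, mul_left_comm z, mul_left_comm w, mul_right_inj' hc,
    mul_right_inj' (pow_ne_zero 2 hc)]
  simp [hc]

theorem mk_mem_phiFiber_iff {l t z w : ℂ} {v : Fin 3 → ℂ} (hv : v ≠ 0) :
    Projectivization.mk ℂ v hv ∈ PhiFiber l t z w ↔ FiberEquations l t z w v := by
  obtain ⟨c, hc⟩ := Projectivization.exists_smul_eq_mk_rep ℂ v hv
  rw [mem_phiFiber_iff, ← hc, Units.smul_def, fiberEquations_smul_iff c.ne_zero]

/-- Substituting `b₁ = 1` and the first equation `b₂ = t + z - z t b₀` into the second equation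
of `PhiFiber` leaves this quadratic in `b₀`. -/
def fiberQuadratic (l t z w b : ℂ) : ℂ :=
  w * z * t * (b * b) + (l - w * t - w * z - z * t) * b + (w + z + t - l - 1)

theorem discrim_fiberQuadratic (l t z w : ℂ) :
    discrim (w * z * t) (l - w * t - w * z - z * t) (w + z + t - l - 1) = PGamma l t z w := by
  unfold discrim PGamma
  ring

theorem mul_sub_one_ne_zero_of_fiberQuadratic_eq_zero {l t z w b : ℂ} (ht0 : t ≠ 0)
    (ht1 : t ≠ 1) (htl : t ≠ l) (hb : fiberQuadratic l t z w b = 0) : b * t - 1 ≠ 0 := by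
  intro h
  have : t * (t - 1) * (t - l) = 0 := by
    unfold fiberQuadratic at hb
    linear_combination t ^ 2 * hb -
      (w * z * t * t * b + w * z * t + (l - w * t - w * z - z * t) * t) * h
  simp only [mul_eq_zero, sub_eq_zero] at this
  tauto

theorem one_sub_mul_ne_zero_of_fiberQuadratic_eq_zero {l t z w b : ℂ} (ht1 : t ≠ 1)
    (htl : t ≠ l) (hz1 : z ≠ 1) (hzl : z ≠ l) (hb : fiberQuadratic l t z w b = 0) :
    1 - b * (t + z - z * t * b) ≠ 0 := by
  intro h
  have : (z - 1) * (z - l) * (t - 1) * (t - l) = 0 := by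
    unfold fiberQuadratic at hb
    linear_combination ((l - z * t) ^ 2 + w * (z * t * ((l + 1 - z - t) + (l - z * t) * b)
        - (t + z) * (l - z * t))) * h -
      (z * t * ((l + 1 - z - t) + (l - z * t) * b) - (t + z) * (l - z * t)) * hb
  simp only [mul_eq_zero, sub_eq_zero] at this
  tauto

theorem fiberEquations_normalized_iff {l t z w b c : ℂ} (ht0 : t ≠ 0) (ht1 : t ≠ 1)
    (htl : t ≠ l) (hz1 : z ≠ 1) (hzl : z ≠ l) :
    FiberEquations l t z w ![b, 1, c] ↔ c = t + z - z * t * b ∧ fiberQuadratic l t z w b = 0 := by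
  simp only [FiberEquations, fiberQuadratic, Matrix.cons_val_zero, Matrix.cons_val_one,
    Matrix.cons_val_two, Matrix.head_cons, Matrix.tail_cons]
  constructor
  · rintro ⟨-, -, e1, e2⟩
    obtain rfl : c = t + z - z * t * b := by linear_combination -e1
    exact ⟨rfl, by linear_combination -e2⟩
  · rintro ⟨rfl, hb⟩
    refine ⟨mul_sub_one_ne_zero_of_fiberQuadratic_eq_zero ht0 ht1 htl hb, ?_, by ring,
      by linear_combination -hb⟩
    simpa using one_sub_mul_ne_zero_of_fiberQuadratic_eq_zero ht1 htl hz1 hzl hb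

/-- The first coordinate of `Φ̃` equals `z` at these points. -/
noncomputable def fiberSection (t z b : ℂ) : ℙ ℂ (Fin 3 → ℂ) :=
  Projectivization.mk ℂ ![b, 1, t + z - z * t * b] fun h => one_ne_zero (congrFun h 1)

theorem fiberSection_injective (t z : ℂ) : Function.Injective (fiberSection t z) := by
  intro b b' h
  obtain ⟨c, hc⟩ := (Projectivization.mk_eq_mk_iff' ℂ _ _ _ _).1 h
  have h1 : c = 1 := by simpa using congrFun hc 1
  simpa [h1] using (congrFun hc 0).symm

theorem rep_one_ne_zero_of_fiberEquations {l t z w : ℂ} (hw0 : w ≠ 0) {v : Fin 3 → ℂ}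
    (hv : FiberEquations l t z w v) : v 1 ≠ 0 := by
  obtain ⟨-, hd, -, e⟩ := hv
  intro h
  rw [h] at hd e
  have : w * (0 ^ 2 - v 0 * v 2) = 0 := by rw [← e]; ring
  exact hw0 ((mul_eq_zero.1 this).resolve_right hd)

theorem phiFiber_eq_image {l t z w : ℂ} (ht0 : t ≠ 0) (ht1 : t ≠ 1) (htl : t ≠ l)
    (hz1 : z ≠ 1) (hzl : z ≠ l) (hw0 : w ≠ 0) :
    PhiFiber l t z w = fiberSection t z '' {b | fiberQuadratic l t z w b = 0} := by
  ext p
  constructor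
  · intro hp
    rw [mem_phiFiber_iff] at hp
    set v := p.rep
    have hv1 : v 1 ≠ 0 := rep_one_ne_zero_of_fiberEquations hw0 hp
    have hnorm : (v 1)⁻¹ • v = ![v 0 / v 1, 1, v 2 / v 1] := by
      ext i
      fin_cases i <;> simp [div_eq_inv_mul, hv1]
    have hp' := (fiberEquations_smul_iff (inv_ne_zero hv1) v).2 hp
    rw [hnorm, fiberEquations_normalized_iff ht0 ht1 htl hz1 hzl] at hp'
    obtain ⟨hc, hb⟩ := hp'
    refine ⟨v 0 / v 1, hb, ?_⟩
    rw [fiberSection, ← p.mk_rep, Projectivization.mk_eq_mk_iff']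
    refine ⟨(v 1)⁻¹, ?_⟩
    rw [hnorm, hc]
  · rintro ⟨b, hb, rfl⟩
    rw [fiberSection, mk_mem_phiFiber_iff, fiberEquations_normalized_iff ht0 ht1 htl hz1 hzl]
    exact ⟨rfl, hb⟩

theorem phi_two_to_one_ramified_over_gamma (l t : ℂ)
    (ht0 : t ≠ 0) (ht1 : t ≠ 1) (htl : t ≠ l)
    (z w : ℂ) (hz : z ∉ ({0, 1, l} : Set ℂ)) (hw : w ∉ ({0, 1, l} : Set ℂ)) :
    (PGamma l t z w ≠ 0 → (PhiFiber l t z w).ncard = 2) ∧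
    (PGamma l t z w = 0 → (PhiFiber l t z w).ncard = 1) := by
  simp only [Set.mem_insert_iff, Set.mem_singleton_iff, not_or] at hz hw
  obtain ⟨hz0, hz1, hzl⟩ := hz
  have hw0 : w ≠ 0 := hw.1
  have ha : w * z * t ≠ 0 := mul_ne_zero (mul_ne_zero hw0 hz0) ht0
  rw [phiFiber_eq_image ht0 ht1 htl hz1 hzl hw0,
    Set.ncard_image_of_injective _ (fiberSection_injective t z), ← discrim_fiberQuadratic]
  exact ⟨ncard_setOf_quadratic_eq_zero_of_discrim_ne_zero ha,
    ncard_setOf_quadratic_eq_zero_of_discrim_eq_zero ha⟩
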